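/- Let 0 < ε₁ < ε₂ < 1/2, σ ∈ [ε₁, ε₂], p₁, p₂ > 0 with p₁ + p₂ ≤ 1, and set F(x) = f_{σ,ε₁,p₁}(−x) + f_{σ,ε₂,p₂}(x) where f_{σ,ε,p}(x) = (p+x)·f_c((pε+xσ)/(p+x)) and f_c(u) = 1 + u·log₂ u + (1−u)·log₂(1−u). If σ ≤ φ(ε₁,ε₂) then F is decreasing on (−p₂(1−2ε₂)/(1−2σ), 0]; if σ ≥ φ(ε₁,ε₂) then F is increasing on [0, p₁ε₁/σ). Here φ(ε₁,ε₂) = ln((1−ε₁)/(1−ε₂))/ln(((1−ε₁)ε₂)/((1−ε₂)ε₁)). -/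

import Mathlib

/-!
Write `C` for `f_c` and `u(x) = (pε + xσ)/(p + x)`. The derivative of the perspective
`x ↦ (p + x) C(u(x))` is `C(u) + (σ - u) C'(u)`, the tangent line of `C` at `u` evaluated at `σ`,
i.e. `T(u) = 1 + σ log₂ u + (1 - σ) log₂ (1 - u)`. Hence `F' = T(u₂(x)) - T(u₁(-x))`, and
`T' = (σ - u)/(u(1 - u) ln 2)`, so `T` increases on `(0, σ]` and decreases on `[σ, 1)`.
For `x ≤ 0` in the first interval, `u₁ ∈ [ε₁, σ]` and `u₂ ∈ [ε₂, 1/2)` (its left endpoint is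
where `u₂ = 1/2`), so `T(u₂) ≤ T(ε₂)` and `T(ε₁) ≤ T(u₁)`; for `x ∈ [0, p₁ε₁/σ)`,
`u₁ ∈ (0, ε₁]` and `u₂ ∈ [σ, ε₂]`, with the reverse inequalities. Finally `T(ε₁) - T(ε₂)` is a
positive multiple of `φ(ε₁, ε₂) - σ`.
-/
open Real Set

theorem monotoneOn_of_hasDerivAt_nonneg {D : Set ℝ} (hD : Convex ℝ D) {f f' : ℝ → ℝ}
    (hf : ∀ x ∈ D, HasDerivAt f (f' x) x) (hf' : ∀ x ∈ D, 0 ≤ f' x) : MonotoneOn f D :=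
  monotoneOn_of_hasDerivWithinAt_nonneg hD
    (fun x hx => (hf x hx).continuousAt.continuousWithinAt)
    (fun x hx => (hf x (interior_subset hx)).hasDerivWithinAt)
    fun x hx => hf' x (interior_subset hx)

theorem antitoneOn_of_hasDerivAt_nonpos {D : Set ℝ} (hD : Convex ℝ D) {f f' : ℝ → ℝ}
    (hf : ∀ x ∈ D, HasDerivAt f (f' x) x) (hf' : ∀ x ∈ D, f' x ≤ 0) : AntitoneOn f D :=
  antitoneOn_of_hasDerivWithinAt_nonpos hD
    (fun x hx => (hf x hx).continuousAt.continuousWithinAt)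
    (fun x hx => (hf x (interior_subset hx)).hasDerivWithinAt)
    fun x hx => hf' x (interior_subset hx)

noncomputable def bscCapacity (u : ℝ) : ℝ :=
  1 + u * logb 2 u + (1 - u) * logb 2 (1 - u)

theorem bscCapacity_eq_one_sub_binEntropy (u : ℝ) : bscCapacity u = 1 - binEntropy u / log 2 := by
  simp only [bscCapacity, binEntropy, logb, log_inv]
  ring

theorem hasDerivAt_bscCapacity {u : ℝ} (h0 : 0 < u) (h1 : u < 1) :
    HasDerivAt bscCapacity (logb 2 u - logb 2 (1 - u)) u := by
  have := ((hasDerivAt_binEntropy h0.ne' h1.ne).div_const (log 2)).const_sub 1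
  rw [funext bscCapacity_eq_one_sub_binEntropy]
  refine this.congr_deriv ?_
  rw [logb, logb]
  ring

/-- The tangent line of `bscCapacity` at `u`, evaluated at `σ`. -/
noncomputable def capacityTangent (σ u : ℝ) : ℝ :=
  1 + σ * logb 2 u + (1 - σ) * logb 2 (1 - u)

theorem bscCapacity_add_mul_sub (σ u : ℝ) :
    bscCapacity u + (σ - u) * (logb 2 u - logb 2 (1 - u)) = capacityTangent σ u := by
  simp only [bscCapacity, capacityTangent]
  ring

theorem hasDerivAt_capacityTangent (σ : ℝ) {u : ℝ} (h0 : 0 < u) (h1 : u < 1) :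
    HasDerivAt (capacityTangent σ) ((σ - u) / (u * (1 - u) * log 2)) u := by
  have hlog : HasDerivAt (fun v => log v) u⁻¹ u := hasDerivAt_log h0.ne'
  have hlog' : HasDerivAt (fun v => log (1 - v)) ((1 - u)⁻¹ * -1) u :=
    (hasDerivAt_log (sub_pos.2 h1).ne').comp u ((hasDerivAt_id u).const_sub 1)
  have := (((hlog.div_const (log 2)).const_mul σ).const_add 1).add
    ((hlog'.div_const (log 2)).const_mul (1 - σ))
  refine this.congr_deriv ?_
  have : 1 - u ≠ 0 := (sub_pos.2 h1).ne'
  field_simp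
  ring

theorem capacityTangent_monotoneOn {σ : ℝ} (hσ : σ < 1) :
    MonotoneOn (capacityTangent σ) (Ioc 0 σ) :=
  monotoneOn_of_hasDerivAt_nonneg (convex_Ioc 0 σ)
    (fun _ hu => hasDerivAt_capacityTangent σ hu.1 (hu.2.trans_lt hσ))
    fun _ hu => div_nonneg (sub_nonneg.2 hu.2)
      (mul_pos (mul_pos hu.1 (sub_pos.2 (hu.2.trans_lt hσ))) (log_pos one_lt_two)).le

theorem capacityTangent_antitoneOn {σ : ℝ} (hσ : 0 < σ) :
    AntitoneOn (capacityTangent σ) (Ico σ 1) :=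
  antitoneOn_of_hasDerivAt_nonpos (convex_Ico σ 1)
    (fun _ hu => hasDerivAt_capacityTangent σ (hσ.trans_le hu.1) hu.2)
    fun _ hu => div_nonpos_of_nonpos_of_nonneg (sub_nonpos.2 hu.1)
      (mul_pos (mul_pos (hσ.trans_le hu.1) (sub_pos.2 hu.2)) (log_pos one_lt_two)).le

/-- The paper's `φ(ε₁, ε₂)`. -/
noncomputable def capacityThreshold (ε₁ ε₂ : ℝ) : ℝ :=
  log ((1 - ε₁) / (1 - ε₂)) / log (((1 - ε₁) * ε₂) / ((1 - ε₂) * ε₁))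

theorem log_oddsRatio_pos {ε₁ ε₂ : ℝ} (h1 : 0 < ε₁) (h12 : ε₁ < ε₂) (h2 : ε₂ < 1) :
    0 < log (((1 - ε₁) * ε₂) / ((1 - ε₂) * ε₁)) := by
  apply log_pos
  rw [one_lt_div (mul_pos (sub_pos.2 h2) h1)]
  nlinarith

theorem capacityTangent_sub_capacityTangent {ε₁ ε₂ : ℝ} (σ : ℝ) (h1 : 0 < ε₁) (h12 : ε₁ < ε₂)
    (h2 : ε₂ < 1) :
    capacityTangent σ ε₁ - capacityTangent σ ε₂ =
      (capacityThreshold ε₁ ε₂ - σ) * (log (((1 - ε₁) * ε₂) / ((1 - ε₂) * ε₁)) / log 2) := by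
  have hL := (log_oddsRatio_pos h1 h12 h2).ne'
  have a1 : 1 - ε₁ ≠ 0 := by linarith
  have a2 : 1 - ε₂ ≠ 0 := by linarith
  have e2 : ε₂ ≠ 0 := by linarith
  rw [← mul_div_assoc, sub_mul, capacityThreshold, div_mul_cancel₀ _ hL,
    log_div (mul_ne_zero a1 e2) (mul_ne_zero a2 h1.ne'), log_mul a1 e2,
    log_mul a2 h1.ne', log_div a1 a2]
  simp only [capacityTangent, logb]
  ring

theorem capacityTangent_le_iff_le_capacityThreshold {ε₁ ε₂ σ : ℝ} (h1 : 0 < ε₁) (h12 : ε₁ < ε₂)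
    (h2 : ε₂ < 1) :
    capacityTangent σ ε₂ ≤ capacityTangent σ ε₁ ↔ σ ≤ capacityThreshold ε₁ ε₂ := by
  have hc := div_pos (log_oddsRatio_pos h1 h12 h2) (log_pos one_lt_two)
  rw [← sub_nonneg, capacityTangent_sub_capacityTangent σ h1 h12 h2,
    mul_nonneg_iff_of_pos_right hc, sub_nonneg]

theorem capacityTangent_le_iff_capacityThreshold_le {ε₁ ε₂ σ : ℝ} (h1 : 0 < ε₁) (h12 : ε₁ < ε₂)
    (h2 : ε₂ < 1) :
    capacityTangent σ ε₁ ≤ capacityTangent σ ε₂ ↔ capacityThreshold ε₁ ε₂ ≤ σ := by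
  have hc := div_pos (log_oddsRatio_pos h1 h12 h2) (log_pos one_lt_two)
  rw [← sub_nonneg, ← neg_sub, capacityTangent_sub_capacityTangent σ h1 h12 h2, ← neg_mul,
    neg_sub, mul_nonneg_iff_of_pos_right hc, sub_nonneg]

noncomputable def mix (p ε σ x : ℝ) : ℝ := (p * ε + x * σ) / (p + x)

/-- `perspective bscCapacity p ε σ` is the paper's `f_{σ,ε,p}`. -/
noncomputable def perspective (f : ℝ → ℝ) (p ε σ x : ℝ) : ℝ := (p + x) * f (mix p ε σ x)

section mix

variable {p ε σ x : ℝ}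

theorem mix_mem_Icc (hp : 0 < p) (hx : 0 ≤ x) (h : ε ≤ σ) : mix p ε σ x ∈ Icc ε σ := by
  have hD : 0 < p + x := by linarith
  constructor
  · rw [mix, le_div_iff₀ hD]; nlinarith
  · rw [mix, div_le_iff₀ hD]; nlinarith

theorem mix_mem_Icc_of_le (hp : 0 < p) (hx : 0 ≤ x) (h : σ ≤ ε) : mix p ε σ x ∈ Icc σ ε := by
  have hD : 0 < p + x := by linarith
  constructor
  · rw [mix, le_div_iff₀ hD]; nlinarith
  · rw [mix, div_le_iff₀ hD]; nlinarith

theorem le_mix_of_nonpos (hD : 0 < p + x) (hx : x ≤ 0) (h : σ ≤ ε) : ε ≤ mix p ε σ x := by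
  rw [mix, le_div_iff₀ hD]; nlinarith

theorem mix_le_of_nonpos (hD : 0 < p + x) (hx : x ≤ 0) (h : ε ≤ σ) : mix p ε σ x ≤ ε := by
  rw [mix, div_le_iff₀ hD]; nlinarith

theorem mix_lt_half_iff (hD : 0 < p + x) :
    mix p ε σ x < 1 / 2 ↔ -(p * (1 - 2 * ε)) < x * (1 - 2 * σ) := by
  rw [mix, div_lt_iff₀ hD]
  constructor <;> intro h <;> linarith

end mix

theorem HasDerivAt.perspective {f : ℝ → ℝ} {f' p ε σ x : ℝ} (hx : p + x ≠ 0)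
    (hf : HasDerivAt f f' (mix p ε σ x)) :
    HasDerivAt (perspective f p ε σ) (f (mix p ε σ x) + (σ - mix p ε σ x) * f') x := by
  have hmix : HasDerivAt (mix p ε σ) ((σ - mix p ε σ x) / (p + x)) x := by
    have := (((hasDerivAt_id x).mul_const σ).const_add (p * ε)).div
      ((hasDerivAt_id x).const_add p) hx
    refine this.congr_deriv ?_
    simp only [mix, id]
    field_simp
  refine (((hasDerivAt_id x).const_add p).mul (hf.comp x hmix)).congr_deriv ?_
  simp only [id, Function.comp_apply]
  field_simp

theorem hasDerivAt_perspective_bscCapacity {p ε σ x : ℝ} (hx : p + x ≠ 0)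
    (hu : mix p ε σ x ∈ Ioo 0 1) :
    HasDerivAt (perspective bscCapacity p ε σ) (capacityTangent σ (mix p ε σ x)) x := by
  rw [← bscCapacity_add_mul_sub]
  exact (hasDerivAt_bscCapacity hu.1 hu.2).perspective hx

theorem hasDerivAt_perspective_neg_add {p₁ ε₁ p₂ ε₂ σ x : ℝ} (hx₁ : x < p₁) (hx₂ : -p₂ < x)
    (hu₁ : mix p₁ ε₁ σ (-x) ∈ Ioo 0 1) (hu₂ : mix p₂ ε₂ σ x ∈ Ioo 0 1) :
    HasDerivAt (fun y => perspective bscCapacity p₁ ε₁ σ (-y) + perspective bscCapacity p₂ ε₂ σ y)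
      (capacityTangent σ (mix p₂ ε₂ σ x) - capacityTangent σ (mix p₁ ε₁ σ (-x))) x := by
  have h₁ := (hasDerivAt_perspective_bscCapacity (by linarith) hu₁).comp x (hasDerivAt_neg x)
  have h₂ := hasDerivAt_perspective_bscCapacity (by linarith) hu₂
  refine (h₁.add h₂).congr_deriv ?_
  ring

theorem antitoneOn_perspective_neg_add {p₁ ε₁ p₂ ε₂ σ : ℝ} (hp₁ : 0 < p₁)
    (h1 : 0 < ε₁) (hσ1 : ε₁ ≤ σ) (hσ2 : σ ≤ ε₂) (h2 : ε₂ < 1 / 2)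
    (hpivot : capacityTangent σ ε₂ ≤ capacityTangent σ ε₁) :
    AntitoneOn (fun x => perspective bscCapacity p₁ ε₁ σ (-x) + perspective bscCapacity p₂ ε₂ σ x)
      (Ioc (-(p₂ * (1 - 2 * ε₂)) / (1 - 2 * σ)) 0) := by
  have hσ : 0 < σ := h1.trans_le hσ1
  have h2σ : 0 < 1 - 2 * σ := by linarith
  have hF' : ∀ x ∈ Ioc (-(p₂ * (1 - 2 * ε₂)) / (1 - 2 * σ)) 0,
      HasDerivAt
        (fun y => perspective bscCapacity p₁ ε₁ σ (-y) + perspective bscCapacity p₂ ε₂ σ y)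
        (capacityTangent σ (mix p₂ ε₂ σ x) - capacityTangent σ (mix p₁ ε₁ σ (-x))) x ∧
      capacityTangent σ (mix p₂ ε₂ σ x) - capacityTangent σ (mix p₁ ε₁ σ (-x)) ≤ 0 := by
    rintro x ⟨hlo, hx⟩
    have hlo : -(p₂ * (1 - 2 * ε₂)) < x * (1 - 2 * σ) := (div_lt_iff₀ h2σ).1 hlo
    have hD₂ : 0 < p₂ + x := by nlinarith
    have hu₁ : mix p₁ ε₁ σ (-x) ∈ Icc ε₁ σ := mix_mem_Icc hp₁ (neg_nonneg.2 hx) hσ1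
    have hu₂ : ε₂ ≤ mix p₂ ε₂ σ x := le_mix_of_nonpos hD₂ hx hσ2
    have hu₂' : mix p₂ ε₂ σ x < 1 / 2 := (mix_lt_half_iff hD₂).2 hlo
    refine ⟨hasDerivAt_perspective_neg_add (by linarith) (by linarith)
      ⟨h1.trans_le hu₁.1, by linarith [hu₁.2]⟩ ⟨by linarith, by linarith⟩, ?_⟩
    have hT₂ : capacityTangent σ (mix p₂ ε₂ σ x) ≤ capacityTangent σ ε₂ :=
      capacityTangent_antitoneOn hσ ⟨hσ2, by linarith⟩ ⟨hσ2.trans hu₂, by linarith⟩ hu₂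
    have hT₁ : capacityTangent σ ε₁ ≤ capacityTangent σ (mix p₁ ε₁ σ (-x)) :=
      capacityTangent_monotoneOn (by linarith) ⟨h1, hσ1⟩ ⟨h1.trans_le hu₁.1, hu₁.2⟩ hu₁.1
    linarith
  exact antitoneOn_of_hasDerivAt_nonpos (convex_Ioc _ _) (fun x hx => (hF' x hx).1)
    fun x hx => (hF' x hx).2

theorem monotoneOn_perspective_neg_add {p₁ ε₁ p₂ ε₂ σ : ℝ} (hp₂ : 0 < p₂)
    (h1 : 0 < ε₁) (hσ1 : ε₁ ≤ σ) (hσ2 : σ ≤ ε₂) (h2 : ε₂ < 1)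
    (hpivot : capacityTangent σ ε₁ ≤ capacityTangent σ ε₂) :
    MonotoneOn (fun x => perspective bscCapacity p₁ ε₁ σ (-x) + perspective bscCapacity p₂ ε₂ σ x)
      (Ico 0 (p₁ * ε₁ / σ)) := by
  have hσ : 0 < σ := h1.trans_le hσ1
  have hF' : ∀ x ∈ Ico 0 (p₁ * ε₁ / σ),
      HasDerivAt
        (fun y => perspective bscCapacity p₁ ε₁ σ (-y) + perspective bscCapacity p₂ ε₂ σ y)
        (capacityTangent σ (mix p₂ ε₂ σ x) - capacityTangent σ (mix p₁ ε₁ σ (-x))) x ∧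
      0 ≤ capacityTangent σ (mix p₂ ε₂ σ x) - capacityTangent σ (mix p₁ ε₁ σ (-x)) := by
    rintro x ⟨hx, hhi⟩
    have hhi : x * σ < p₁ * ε₁ := (lt_div_iff₀ hσ).1 hhi
    have hD₁ : 0 < p₁ + -x := by nlinarith
    have hu₁ : 0 < mix p₁ ε₁ σ (-x) := div_pos (by linarith) hD₁
    have hu₁' : mix p₁ ε₁ σ (-x) ≤ ε₁ := mix_le_of_nonpos hD₁ (neg_nonpos.2 hx) hσ1
    have hu₂ : mix p₂ ε₂ σ x ∈ Icc σ ε₂ := mix_mem_Icc_of_le hp₂ hx hσ2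
    refine ⟨hasDerivAt_perspective_neg_add (by linarith) (by linarith)
      ⟨hu₁, by linarith⟩ ⟨hσ.trans_le hu₂.1, by linarith [hu₂.2]⟩, ?_⟩
    have hT₁ : capacityTangent σ (mix p₁ ε₁ σ (-x)) ≤ capacityTangent σ ε₁ :=
      capacityTangent_monotoneOn (by linarith) ⟨hu₁, hu₁'.trans hσ1⟩ ⟨h1, hσ1⟩ hu₁'
    have hT₂ : capacityTangent σ ε₂ ≤ capacityTangent σ (mix p₂ ε₂ σ x) :=
      capacityTangent_antitoneOn hσ ⟨hu₂.1, by linarith [hu₂.2]⟩ ⟨hσ2, h2⟩ hu₂.2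
    linarith
  exact monotoneOn_of_hasDerivAt_nonneg (convex_Ico _ _) (fun x hx => (hF' x hx).1)
    fun x hx => (hF' x hx).2

theorem F_monotonicity_general (ε₁ ε₂ σ p₁ p₂ : ℝ)
    (h1 : 0 < ε₁) (h12 : ε₁ < ε₂) (h2 : ε₂ < 1/2)
    (hσ1 : ε₁ ≤ σ) (hσ2 : σ ≤ ε₂)
    (hp1 : 0 < p₁) (hp2 : 0 < p₂) :
    (σ ≤ Real.log ((1 - ε₁) / (1 - ε₂)) / Real.log (((1 - ε₁) * ε₂) / ((1 - ε₂) * ε₁)) →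
      AntitoneOn (fun x : ℝ =>
        (p₁ + -x) * (1 + ((p₁ * ε₁ + (-x) * σ) / (p₁ + -x)) *
              Real.logb 2 ((p₁ * ε₁ + (-x) * σ) / (p₁ + -x))
            + (1 - (p₁ * ε₁ + (-x) * σ) / (p₁ + -x)) *
              Real.logb 2 (1 - (p₁ * ε₁ + (-x) * σ) / (p₁ + -x)))
        + (p₂ + x) * (1 + ((p₂ * ε₂ + x * σ) / (p₂ + x)) *
              Real.logb 2 ((p₂ * ε₂ + x * σ) / (p₂ + x))
            + (1 - (p₂ * ε₂ + x * σ) / (p₂ + x)) *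
              Real.logb 2 (1 - (p₂ * ε₂ + x * σ) / (p₂ + x))))
        (Set.Ioc (-(p₂ * (1 - 2 * ε₂)) / (1 - 2 * σ)) 0)) ∧
    (Real.log ((1 - ε₁) / (1 - ε₂)) / Real.log (((1 - ε₁) * ε₂) / ((1 - ε₂) * ε₁)) ≤ σ →
      MonotoneOn (fun x : ℝ =>
        (p₁ + -x) * (1 + ((p₁ * ε₁ + (-x) * σ) / (p₁ + -x)) *
              Real.logb 2 ((p₁ * ε₁ + (-x) * σ) / (p₁ + -x))
            + (1 - (p₁ * ε₁ + (-x) * σ) / (p₁ + -x)) *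
              Real.logb 2 (1 - (p₁ * ε₁ + (-x) * σ) / (p₁ + -x)))
        + (p₂ + x) * (1 + ((p₂ * ε₂ + x * σ) / (p₂ + x)) *
              Real.logb 2 ((p₂ * ε₂ + x * σ) / (p₂ + x))
            + (1 - (p₂ * ε₂ + x * σ) / (p₂ + x)) *
              Real.logb 2 (1 - (p₂ * ε₂ + x * σ) / (p₂ + x))))
        (Set.Ico 0 (p₁ * ε₁ / σ))) := by
  have h2' : ε₂ < 1 := by linarith
  exact ⟨fun hφ => antitoneOn_perspective_neg_add hp1 h1 hσ1 hσ2 h2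
      ((capacityTangent_le_iff_le_capacityThreshold h1 h12 h2').2 hφ),
    fun hφ => monotoneOn_perspective_neg_add hp2 h1 hσ1 hσ2 h2'
      ((capacityTangent_le_iff_capacityThreshold_le h1 h12 h2').2 hφ)⟩

theorem F_monotonicity (ε₁ ε₂ σ p₁ p₂ : ℝ)
    (h1 : 0 < ε₁) (h12 : ε₁ < ε₂) (h2 : ε₂ < 1/2)
    (hσ1 : ε₁ ≤ σ) (hσ2 : σ ≤ ε₂)
    (hp1 : 0 < p₁) (hp2 : 0 < p₂) (hp : p₁ + p₂ ≤ 1) :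
    (σ ≤ Real.log ((1 - ε₁) / (1 - ε₂)) / Real.log (((1 - ε₁) * ε₂) / ((1 - ε₂) * ε₁)) →
      AntitoneOn (fun x : ℝ =>
        (p₁ + -x) * (1 + ((p₁ * ε₁ + (-x) * σ) / (p₁ + -x)) *
              Real.logb 2 ((p₁ * ε₁ + (-x) * σ) / (p₁ + -x))
            + (1 - (p₁ * ε₁ + (-x) * σ) / (p₁ + -x)) *
              Real.logb 2 (1 - (p₁ * ε₁ + (-x) * σ) / (p₁ + -x)))
        + (p₂ + x) * (1 + ((p₂ * ε₂ + x * σ) / (p₂ + x)) *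
              Real.logb 2 ((p₂ * ε₂ + x * σ) / (p₂ + x))
            + (1 - (p₂ * ε₂ + x * σ) / (p₂ + x)) *
              Real.logb 2 (1 - (p₂ * ε₂ + x * σ) / (p₂ + x))))
        (Set.Ioc (-(p₂ * (1 - 2 * ε₂)) / (1 - 2 * σ)) 0)) ∧
    (Real.log ((1 - ε₁) / (1 - ε₂)) / Real.log (((1 - ε₁) * ε₂) / ((1 - ε₂) * ε₁)) ≤ σ →
      MonotoneOn (fun x : ℝ =>
        (p₁ + -x) * (1 + ((p₁ * ε₁ + (-x) * σ) / (p₁ + -x)) *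
              Real.logb 2 ((p₁ * ε₁ + (-x) * σ) / (p₁ + -x))
            + (1 - (p₁ * ε₁ + (-x) * σ) / (p₁ + -x)) *
              Real.logb 2 (1 - (p₁ * ε₁ + (-x) * σ) / (p₁ + -x)))
        + (p₂ + x) * (1 + ((p₂ * ε₂ + x * σ) / (p₂ + x)) *
              Real.logb 2 ((p₂ * ε₂ + x * σ) / (p₂ + x))
            + (1 - (p₂ * ε₂ + x * σ) / (p₂ + x)) *
              Real.logb 2 (1 - (p₂ * ε₂ + x * σ) / (p₂ + x))))
        (Set.Ico 0 (p₁ * ε₁ / σ))) :=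
  F_monotonicity_general ε₁ ε₂ σ p₁ p₂ h1 h12 h2 hσ1 hσ2 hp1 hp2
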